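/- Let ℓ, m ≥ 1 be integers, at least one of which is even, and let Φ be the total Culler–Shalen seminorm function for K = J(ℓ,−m) (with α = ℓm+1 and β = m). Then Φ(0,1) = 2ℓm if ℓ and m are both even, Φ(0,1) = m(ℓm+1) if ℓ is odd, and Φ(0,1) = ℓ(ℓm+1) if m is odd. (This value is the M-degree of the Â-polynomial of J(ℓ,−m).) -/

import Mathlib

noncomputable section

/-- The continued fraction value `cf [n_1, …, n_k] = 1/(n_1 + 1/(n_2 + ⋯ + 1/n_k))`. -/
def cf : List ℤ → ℚ
  | [] => 0
  | n :: L => 1 / ((n : ℚ) + cf L)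

/-- `n⁺`: the number of (0-based) indices `j` with `sign(n_j) = (−1)^j`
(1-based: `sign(n_i) = (−1)^{i−1}`). -/
def nplus (L : List ℤ) : ℕ :=
  ((Finset.range L.length).filter (fun j => (L.getD j 0).sign = (-1) ^ j)).card

/-- `s(n) = n⁺ − n⁻` where `n⁻ = k − n⁺`. -/
def sval (L : List ℤ) : ℤ := 2 * (nplus L : ℤ) - L.length

/-- The set `S` of all finite integer sequences with all entries of absolute value at
least `2` whose continued fraction value is `β/α` or `(β−α)/α`. -/
def Sset (α β : ℤ) : Set (List ℤ) :=
  {L | (∀ n ∈ L, 2 ≤ |n|) ∧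
    (cf L = (β : ℚ) / (α : ℚ) ∨ cf L = ((β : ℚ) - (α : ℚ)) / (α : ℚ))}

/-- The weight `∏_{j=1}^{k} (|n_j| − 1)` of an expansion. -/
def weightProd (L : List ℤ) : ℤ := (L.map (fun n => |n| - 1)).prod

/-- The total Culler–Shalen seminorm
`Φ(p,q) = (1/2)(−|p| + Σ_{n∈S} |p − N_n·q|·∏_j (|n_j| − 1))`, where
`N_n = 2(s(n) − s(n₀))` and `n₀` is the all-even expansion in `S`. -/
def totalSeminorm (α β : ℤ) (n₀ : List ℤ) (p q : ℤ) : ℚ :=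
  (1 / 2) * (-(|(p : ℚ)|) +
    ∑ᶠ L ∈ Sset α β, ((|p - 2 * (sval L - sval n₀) * q| * weightProd L : ℤ) : ℚ))

/-! The sequences in `S` are found by running the continued fraction algorithm backwards: the
head `n` of an admissible expansion of `r` satisfies `|1/r - n| < 1`. For `m / (ℓm+1)` this
leaves `[ℓ+1, -2, 2, …]` (weight `ℓ`, `s = m`) and, when `ℓ, m ≥ 2`, `[ℓ, m]`
(weight `(ℓ-1)(m-1)`, `s = 0`); for `(m - ℓm - 1) / (ℓm+1)` only `[-2, 2, …, ±(m+1)]`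
(weight `m`, `s = -ℓ`). The parities of `ℓ` and `m` decide which of them is `n₀`, and
`Φ(0,1) = Σ |s(n) - s(n₀)| ∏ (|n_j| - 1)` is an explicit three-term sum. -/

def Admissible (L : List ℤ) : Prop := ∀ n ∈ L, 2 ≤ |n|

-- `twist^[k] L = [-2, 2, -2, …] ++ (-1)^k • L`, with `k` leading entries `±2`.
def twist (L : List ℤ) : List ℤ := -2 :: L.map Neg.neg

@[simp] lemma cf_nil : cf [] = 0 := rfl

@[simp] lemma cf_cons (n : ℤ) (L : List ℤ) : cf (n :: L) = 1 / ((n : ℚ) + cf L) := rfl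

lemma inv_cf_cons (n : ℤ) (L : List ℤ) : (cf (n :: L))⁻¹ = n + cf L := by
  simp

lemma cf_map_neg (L : List ℤ) : cf (L.map Neg.neg) = -cf L := by
  induction L with
  | nil => simp
  | cons n L ih => simp [ih, one_div, ← inv_neg, add_comm]

lemma cf_twist (L : List ℤ) : cf (twist L) = (-2 - cf L)⁻¹ := by
  simp [twist, cf_map_neg, sub_eq_add_neg]

lemma one_lt_abs_add {n x : ℚ} (hn : 2 ≤ |n|) (hx : |x| < 1) : 1 < |n + x| := by
  have := abs_sub_abs_le_abs_add n x
  linarith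

namespace Admissible

variable {L : List ℤ}

lemma cons_iff {n : ℤ} : Admissible (n :: L) ↔ 2 ≤ |n| ∧ Admissible L :=
  List.forall_mem_cons

lemma map_neg (h : Admissible L) : Admissible (L.map Neg.neg) := by
  intro n hn
  obtain ⟨m, hm, rfl⟩ := List.mem_map.mp hn
  simpa using h m hm

lemma twist (h : Admissible L) : Admissible (twist L) :=
  cons_iff.mpr ⟨by norm_num, h.map_neg⟩

lemma iterate_twist (h : Admissible L) (k : ℕ) : Admissible (_root_.twist^[k] L) := by
  induction k with
  | zero => exact h
  | succ k ih => rw [Function.iterate_succ_apply']; exact ih.twist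

lemma zero_notMem (h : Admissible L) : 0 ∉ L :=
  fun h0 => by simpa using h 0 h0

lemma abs_cf_lt_one (h : Admissible L) : |cf L| < 1 := by
  induction L with
  | nil => simp
  | cons n L ih =>
    obtain ⟨hn, hL⟩ := cons_iff.mp h
    have hsum : 1 < |(n : ℚ) + cf L| := one_lt_abs_add (by exact_mod_cast hn) (ih hL)
    rw [cf_cons, abs_div, abs_one]
    exact (div_lt_one (by linarith)).mpr hsum

lemma cf_ne_zero (h : Admissible L) (hL : L ≠ []) : cf L ≠ 0 := by
  obtain ⟨n, L, rfl⟩ := List.exists_cons_of_ne_nil hL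
  obtain ⟨hn, hL⟩ := cons_iff.mp h
  have hsum : 1 < |(n : ℚ) + cf L| := one_lt_abs_add (by exact_mod_cast hn) hL.abs_cf_lt_one
  rw [cf_cons]
  exact one_div_ne_zero (abs_pos.mp (one_pos.trans hsum))

lemma eq_nil_of_cf_eq_zero (h : Admissible L) (h0 : cf L = 0) : L = [] :=
  not_not.mp fun hL => h.cf_ne_zero hL h0

lemma eq_singleton_of_cf_eq_inv (h : Admissible L) {a : ℤ} (ha : a ≠ 0)
    (hv : cf L = (a : ℚ)⁻¹) : L = [a] := by
  rcases L with _ | ⟨n, L⟩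
  · exact absurd (by simpa [eq_comm] using hv) ha
  obtain ⟨-, hL⟩ := cons_iff.mp h
  have htail : cf L = a - n := by
    rw [← inv_inv (a : ℚ), ← hv, inv_cf_cons]; ring
  have hn : n = a := by
    have := hL.abs_cf_lt_one
    rw [htail] at this
    have : |a - n| < 1 := by exact_mod_cast this
    linarith [Int.abs_lt_one_iff.mp this]
  subst hn
  rw [hL.eq_nil_of_cf_eq_zero (by simpa using htail)]

end Admissible

lemma cf_iterate_twist {L₀ : List ℤ} {p d : ℚ} (hp : 0 ≤ p) (hd : 0 < d)
    (h : cf L₀ = -p / (p + d)) (k : ℕ) :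
    cf (twist^[k] L₀) = -(p + k * d) / (p + (k + 1) * d) := by
  induction k with
  | zero => simpa using h
  | succ k ih =>
    have hden :
        -2 - -(p + k * d) / (p + (k + 1) * d) = -(p + (k + 2) * d) / (p + (k + 1) * d) := by
      field_simp
      ring
    rw [Function.iterate_succ_apply', cf_twist, ih, hden, inv_div, div_neg, ← neg_div]
    push_cast
    ring

lemma cf_iterate_twist_nil (k : ℕ) : cf (twist^[k] []) = -k / (k + 1) := by
  simpa using cf_iterate_twist (p := 0) le_rfl one_pos (by simp) k

lemma cf_iterate_twist_singleton {m : ℕ} (hm : 0 < m) (k : ℕ) :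
    cf (twist^[k] [-((m : ℤ) + 1)]) = -(1 + k * m) / (1 + (k + 1) * m) := by
  refine cf_iterate_twist zero_le_one (by exact_mod_cast hm) ?_ k
  rw [cf_cons, cf_nil, add_zero, one_div, neg_div, one_div, ← inv_neg]
  push_cast
  ring

namespace Admissible

variable {L M : List ℤ}

lemma cf_twist_lt_zero (h : Admissible L) : cf (_root_.twist L) < 0 := by
  have := abs_lt.mp h.abs_cf_lt_one
  rw [cf_twist, inv_lt_zero]
  linarith

/-- The head `n` of `L` satisfies `|-2 - cf M - n| < 1` with `-1 < cf M ≤ 0`, forcing `n = -2`. -/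
lemma exists_eq_twist (hM : Admissible M) (hM₀ : cf M ≤ 0) (hL : Admissible L)
    (hv : cf L = cf (_root_.twist M)) :
    ∃ L', Admissible L' ∧ cf L' = cf M ∧ L = _root_.twist L' := by
  rcases L with _ | ⟨n, L⟩
  · exact absurd hv.symm (by simpa using hM.cf_twist_lt_zero.ne)
  obtain ⟨hn, hL⟩ := cons_iff.mp hL
  have htail : cf L = -2 - cf M - n := by
    rw [← inv_inv (-2 - cf M), ← cf_twist, ← hv, inv_cf_cons]; ring
  have hn₂ : n = -2 := by
    have hLb := abs_lt.mp hL.abs_cf_lt_one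
    have hMb := abs_lt.mp hM.abs_cf_lt_one
    have h₁ : (-3 : ℤ) < n := by exact_mod_cast (show (-3 : ℚ) < n by linarith)
    have h₂ : n < 0 := by exact_mod_cast (show (n : ℚ) < 0 by linarith)
    rcases le_abs'.mp hn with hn | hn <;> omega
  refine ⟨L.map Neg.neg, hL.map_neg, by rw [cf_map_neg, htail, hn₂]; push_cast; ring, ?_⟩
  simp [_root_.twist, hn₂]

lemma eq_iterate_twist {L₀ : List ℤ} (h₀ : Admissible L₀) (hv₀ : cf L₀ ≤ 0)
    (huniq : ∀ L, Admissible L → cf L = cf L₀ → L = L₀) (k : ℕ) :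
    ∀ L, Admissible L → cf L = cf (_root_.twist^[k] L₀) → L = _root_.twist^[k] L₀ := by
  induction k with
  | zero => exact huniq
  | succ k ih =>
    intro L hL hv
    have hk₀ : cf (_root_.twist^[k] L₀) ≤ 0 := by
      cases k with
      | zero => exact hv₀
      | succ k =>
        rw [Function.iterate_succ_apply']
        exact (h₀.iterate_twist k).cf_twist_lt_zero.le
    rw [Function.iterate_succ_apply'] at hv ⊢
    obtain ⟨L', hL', hv', rfl⟩ := (h₀.iterate_twist k).exists_eq_twist hk₀ hL hv
    rw [ih L' hL' hv']

end Admissible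

lemma sval_nil : sval [] = 0 := rfl

lemma two_mul_ite_sign_sub_one {x : ℤ} (hx : x ≠ 0) (j : ℕ) :
    2 * (if x.sign = (-1) ^ j then 1 else 0) - 1 = x.sign * (-1) ^ j := by
  have hsign : x.sign = 1 ∨ x.sign = -1 := by
    rcases hx.lt_or_gt with h | h
    · exact Or.inr (Int.sign_eq_neg_one_of_neg h)
    · exact Or.inl (Int.sign_eq_one_of_pos h)
  rcases hsign with hs | hs <;> rcases neg_one_pow_eq_or ℤ j with hj | hj <;> simp [hs, hj]

lemma sval_eq_sum {L : List ℤ} (h : 0 ∉ L) :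
    sval L = ∑ j ∈ Finset.range L.length, (L.getD j 0).sign * (-1) ^ j := by
  have hterm : ∀ j ∈ Finset.range L.length,
      2 * (if (L.getD j 0).sign = (-1) ^ j then 1 else 0) - 1 = (L.getD j 0).sign * (-1) ^ j := by
    intro j hj
    have hj : j < L.length := Finset.mem_range.mp hj
    refine two_mul_ite_sign_sub_one (fun h0 => h ?_) j
    rw [← h0, List.getD_eq_getElem _ _ hj]
    exact List.getElem_mem hj
  rw [← Finset.sum_congr rfl hterm, Finset.sum_sub_distrib, ← Finset.mul_sum, sval, nplus,
    Finset.natCast_card_filter]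
  simp

lemma sval_cons {n : ℤ} {L : List ℤ} (h : 0 ∉ n :: L) : sval (n :: L) = n.sign - sval L := by
  rw [sval_eq_sum h, sval_eq_sum (fun h0 => h (List.mem_cons_of_mem n h0)), List.length_cons,
    Finset.sum_range_succ']
  simp [pow_succ, sub_eq_add_neg, add_comm]

lemma sval_map_neg {L : List ℤ} (h : 0 ∉ L) : sval (L.map Neg.neg) = -sval L := by
  induction L with
  | nil => rfl
  | cons n L ih =>
    have hL : 0 ∉ L := fun h0 => h (List.mem_cons_of_mem n h0)
    rw [List.map_cons, sval_cons (by simpa [eq_comm] using h), sval_cons h, ih hL, Int.sign_neg]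
    ring

lemma sval_twist {L : List ℤ} (h : 0 ∉ L) : sval (twist L) = sval L - 1 := by
  rw [twist, sval_cons (by simpa using h), sval_map_neg h, show Int.sign (-2) = -1 from rfl]
  ring

lemma notMem_twist {L : List ℤ} (h : 0 ∉ L) : 0 ∉ twist L := by
  simpa [twist] using h

lemma sval_iterate_twist {L : List ℤ} (h : 0 ∉ L) (k : ℕ) :
    sval (twist^[k] L) = sval L - k := by
  induction k with
  | zero => simp
  | succ k ih =>
    have hk : 0 ∉ twist^[k] L := by
      clear ih
      induction k with
      | zero => exact h
      | succ k ih => rw [Function.iterate_succ_apply']; exact notMem_twist ih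
    rw [Function.iterate_succ_apply', sval_twist hk, ih]
    push_cast
    ring

@[simp] lemma weightProd_nil : weightProd [] = 1 := rfl

@[simp] lemma weightProd_cons (n : ℤ) (L : List ℤ) :
    weightProd (n :: L) = (|n| - 1) * weightProd L := by
  simp [weightProd]

lemma weightProd_twist (L : List ℤ) : weightProd (twist L) = weightProd L := by
  simp [twist, weightProd, Function.comp_def]

lemma weightProd_iterate_twist (L : List ℤ) (k : ℕ) :
    weightProd (twist^[k] L) = weightProd L := by
  induction k with
  | zero => rfl
  | succ k ih => rw [Function.iterate_succ_apply', weightProd_twist, ih]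

lemma forall_even_twist_iff {L : List ℤ} :
    (∀ x ∈ twist L, Even x) ↔ ∀ x ∈ L, Even x := by
  simp only [twist, List.forall_mem_cons, List.forall_mem_map, even_neg]
  exact and_iff_right (by decide)

lemma forall_even_iterate_twist_iff {L : List ℤ} (k : ℕ) :
    (∀ x ∈ twist^[k] L, Even x) ↔ ∀ x ∈ L, Even x := by
  induction k with
  | zero => rfl
  | succ k ih => rw [Function.iterate_succ_apply', forall_even_twist_iff, ih]

lemma sval_pair {a b : ℤ} (ha : 0 < a) (hb : 0 < b) : sval [a, b] = 0 := by
  rw [sval_cons (by simp; omega), sval_cons (by simp; omega), Int.sign_eq_one_of_pos ha,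
    Int.sign_eq_one_of_pos hb]
  rfl

lemma cf_singleton (a : ℤ) : cf [a] = (a : ℚ)⁻¹ := by
  simp

lemma cf_pair (a : ℤ) {b : ℤ} (hb : b ≠ 0) : cf [a, b] = b / (a * b + 1) := by
  have hb' : (b : ℚ) ≠ 0 := by exact_mod_cast hb
  have hden : (a : ℚ) + cf [b] = (a * b + 1) / b := by
    rw [cf_singleton]
    field_simp
  rw [cf_cons, hden, one_div_div]

lemma totalSeminorm_zero_one (α β : ℤ) (n₀ : List ℤ) :
    totalSeminorm α β n₀ 0 1 =
      ∑ᶠ L ∈ Sset α β, ((|sval L - sval n₀| * weightProd L : ℤ) : ℚ) := by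
  have hterm : ∀ L, ((|0 - 2 * (sval L - sval n₀) * 1| * weightProd L : ℤ) : ℚ)
      = 2 * ((|sval L - sval n₀| * weightProd L : ℤ) : ℚ) := by
    intro L
    rw [zero_sub, mul_one, abs_neg, abs_mul, abs_two]
    push_cast
    ring
  simp only [totalSeminorm, hterm, ← mul_finsum_mem, Int.cast_zero, abs_zero, neg_zero, zero_add]
  ring

section JKnot

variable {ℓ m : ℕ} {L : List ℤ}

lemma cf_cons_iterate_twist_nil (ℓ : ℕ) (hm : 1 ≤ m) :
    cf ((ℓ + 1 : ℤ) :: twist^[m - 1] []) = m / (ℓ * m + 1) := by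
  have hm' : (m : ℚ) ≠ 0 := by positivity
  have hden : ((ℓ + 1 : ℤ) : ℚ) + cf (twist^[m - 1] []) = (ℓ * m + 1) / m := by
    rw [cf_iterate_twist_nil, Nat.cast_sub hm, Nat.cast_one, sub_add_cancel]
    push_cast
    field_simp
    ring
  rw [cf_cons, hden, one_div_div]

lemma cf_iterate_twist_neg_succ (hℓ : 1 ≤ ℓ) (hm : 1 ≤ m) :
    cf (twist^[ℓ - 1] [-((m : ℤ) + 1)]) = (m - (ℓ * m + 1)) / (ℓ * m + 1) := by
  rw [cf_iterate_twist_singleton hm, Nat.cast_sub hℓ]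
  push_cast
  ring_nf

lemma admissible_singleton_neg_succ (hm : 1 ≤ m) : Admissible [-((m : ℤ) + 1)] := by
  intro x hx
  rw [List.mem_singleton.mp hx, abs_neg, abs_of_nonneg (by positivity)]
  omega

/-- The head `n` of an expansion of `m / (ℓ m + 1)` satisfies `|ℓ + 1/m - n| < 1`,
so `n = ℓ` or `n = ℓ + 1`. -/
lemma eq_of_cf_eq_div (hm : 1 ≤ m) (hL : Admissible L) (hv : cf L = m / (ℓ * m + 1)) :
    L = (ℓ + 1 : ℤ) :: twist^[m - 1] [] ∨ L = [(ℓ : ℤ), m] := by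
  have hm' : (1 : ℚ) ≤ m := by exact_mod_cast hm
  rcases L with _ | ⟨n, L⟩
  · exact absurd hv (by rw [cf_nil]; positivity)
  obtain ⟨-, hL'⟩ := Admissible.cons_iff.mp hL
  have htail : cf L = ℓ + (m : ℚ)⁻¹ - n := by
    have := inv_cf_cons n L
    rw [hv, inv_div] at this
    field_simp at this ⊢
    linarith
  have hn : n = ℓ ∨ n = ℓ + 1 := by
    have hb := abs_lt.mp hL'.abs_cf_lt_one
    have hinv : (m : ℚ)⁻¹ ≤ 1 := inv_le_one_of_one_le₀ hm'
    have hinv' : 0 < (m : ℚ)⁻¹ := by positivity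
    have h₁ : (ℓ - 1 : ℤ) < n := by exact_mod_cast (show (ℓ - 1 : ℚ) < n by linarith)
    have h₂ : n < (ℓ + 2 : ℤ) := by exact_mod_cast (show (n : ℚ) < ℓ + 2 by linarith)
    omega
  rcases hn with rfl | rfl
  · right
    rw [hL'.eq_singleton_of_cf_eq_inv (a := m) (by omega) (by rw [htail]; push_cast; ring)]
  · left
    congr 1
    refine Admissible.eq_iterate_twist (L₀ := []) (by simp [Admissible]) le_rfl
      (fun L hL h => hL.eq_nil_of_cf_eq_zero h) (m - 1) L hL' ?_
    rw [htail, cf_iterate_twist_nil, Nat.cast_sub hm, Nat.cast_one, sub_add_cancel]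
    push_cast
    field_simp
    ring

lemma eq_of_cf_eq_sub_div (hℓ : 1 ≤ ℓ) (hm : 1 ≤ m) (hL : Admissible L)
    (hv : cf L = (m - (ℓ * m + 1)) / (ℓ * m + 1)) : L = twist^[ℓ - 1] [-((m : ℤ) + 1)] := by
  refine (admissible_singleton_neg_succ hm).eq_iterate_twist ?_ (fun L hL h => ?_)
    (ℓ - 1) L hL ?_
  · rw [cf_singleton, inv_nonpos]
    push_cast
    linarith
  · exact hL.eq_singleton_of_cf_eq_inv (by omega) (h.trans (cf_singleton _))
  · rw [hv, cf_iterate_twist_neg_succ hℓ hm]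

lemma eq_of_mem_Sset (hℓ : 1 ≤ ℓ) (hm : 1 ≤ m) (hL : L ∈ Sset (ℓ * m + 1) m) :
    L = (ℓ + 1 : ℤ) :: twist^[m - 1] [] ∨ L = twist^[ℓ - 1] [-((m : ℤ) + 1)] ∨
      L = [(ℓ : ℤ), m] := by
  obtain ⟨hadm, hv | hv⟩ := hL
  · push_cast at hv
    rcases eq_of_cf_eq_div hm hadm hv with h | h <;> simp [h]
  · push_cast at hv
    exact Or.inr (Or.inl (eq_of_cf_eq_sub_div hℓ hm hadm hv))

lemma cons_iterate_twist_nil_mem_Sset (hℓ : 1 ≤ ℓ) (hm : 1 ≤ m) :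
    (ℓ + 1 : ℤ) :: twist^[m - 1] [] ∈ Sset (ℓ * m + 1) m := by
  refine ⟨Admissible.cons_iff.mpr ⟨?_, Admissible.iterate_twist (by simp [Admissible]) _⟩,
    Or.inl ?_⟩
  · rw [abs_of_nonneg (by positivity)]
    omega
  · rw [cf_cons_iterate_twist_nil ℓ hm]
    push_cast
    rfl

lemma iterate_twist_neg_succ_mem_Sset (hℓ : 1 ≤ ℓ) (hm : 1 ≤ m) :
    twist^[ℓ - 1] [-((m : ℤ) + 1)] ∈ Sset (ℓ * m + 1) m := by
  refine ⟨(admissible_singleton_neg_succ hm).iterate_twist _, Or.inr ?_⟩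
  rw [cf_iterate_twist_neg_succ hℓ hm]
  push_cast
  rfl

lemma pair_mem_Sset (hℓ : 2 ≤ ℓ) (hm : 2 ≤ m) : [(ℓ : ℤ), m] ∈ Sset (ℓ * m + 1) m := by
  refine ⟨?_, Or.inl ?_⟩
  · simp
    omega
  · rw [cf_pair _ (by omega)]
    push_cast
    rfl

lemma sval_cons_iterate_twist_nil (ℓ : ℕ) (hm : 1 ≤ m) :
    sval ((ℓ + 1 : ℤ) :: twist^[m - 1] []) = m := by
  have hnil : (0 : ℤ) ∉ twist^[m - 1] [] :=
    (Admissible.iterate_twist (by simp [Admissible]) _).zero_notMem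
  rw [sval_cons (List.not_mem_cons_of_ne_of_not_mem (by omega) hnil),
    sval_iterate_twist (by simp), Int.sign_eq_one_of_pos (by omega), sval_nil]
  omega

lemma sval_iterate_twist_neg_succ (hℓ : 1 ≤ ℓ) (m : ℕ) :
    sval (twist^[ℓ - 1] [-((m : ℤ) + 1)]) = -ℓ := by
  rw [sval_iterate_twist (by simp; omega), sval_cons (by simp; omega),
    Int.sign_eq_neg_one_of_neg (by omega), sval_nil]
  omega

lemma weightProd_cons_iterate_twist_nil (ℓ k : ℕ) :
    weightProd ((ℓ + 1 : ℤ) :: twist^[k] []) = ℓ := by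
  rw [weightProd_cons, weightProd_iterate_twist, abs_of_nonneg (by positivity)]
  simp

lemma weightProd_iterate_twist_neg_succ (k m : ℕ) :
    weightProd (twist^[k] [-((m : ℤ) + 1)]) = m := by
  rw [weightProd_iterate_twist, weightProd_cons, abs_neg, abs_of_nonneg (by positivity)]
  simp

lemma weightProd_pair (ℓ m : ℕ) : weightProd [(ℓ : ℤ), m] = (ℓ - 1) * (m - 1) := by
  simp

/-- `[ℓ, m]` lies in `S` only when `ℓ, m ≥ 2`, but otherwise its weight `(ℓ-1)(m-1)` vanishes,
so one formula covers all cases. -/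
lemma totalSeminorm_J_zero_one (hℓ : 1 ≤ ℓ) (hm : 1 ≤ m) (n₀ : List ℤ) :
    totalSeminorm (ℓ * m + 1) m n₀ 0 1 = ((|m - sval n₀| * ℓ + |-ℓ - sval n₀| * m +
      |0 - sval n₀| * ((ℓ - 1) * (m - 1)) : ℤ) : ℚ) := by
  set T : Finset (List ℤ) :=
    {(ℓ + 1 : ℤ) :: twist^[m - 1] [], twist^[ℓ - 1] [-((m : ℤ) + 1)], [(ℓ : ℤ), m]} with hT
  have hsb := sval_cons_iterate_twist_nil ℓ hm
  have hsc := sval_iterate_twist_neg_succ hℓ m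
  have hsa : sval [(ℓ : ℤ), m] = 0 := sval_pair (by omega) (by omega)
  rw [totalSeminorm_zero_one, finsum_mem_inter_support_eq' _ _ (T : Set (List ℤ)),
    finsum_mem_coe_finset, hT, Finset.sum_insert, Finset.sum_pair]
  · rw [hsb, hsc, hsa, weightProd_cons_iterate_twist_nil, weightProd_iterate_twist_neg_succ,
      weightProd_pair]
    push_cast
    ring
  · intro h
    rw [h] at hsc
    omega
  · simp only [Finset.mem_insert, Finset.mem_singleton, not_or]
    constructor <;> intro h <;> rw [h] at hsb <;> omega
  · intro L hL
    have hw : weightProd L ≠ 0 := fun h0 => hL (by simp [h0])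
    simp only [hT, Finset.coe_insert, Finset.coe_singleton, Set.mem_insert_iff,
      Set.mem_singleton_iff]
    refine ⟨eq_of_mem_Sset hℓ hm, ?_⟩
    rintro (rfl | rfl | rfl)
    · exact cons_iterate_twist_nil_mem_Sset hℓ hm
    · exact iterate_twist_neg_succ_mem_Sset hℓ hm
    · obtain ⟨hℓ₁, hm₁⟩ := mul_ne_zero_iff.mp (weightProd_pair ℓ m ▸ hw)
      exact pair_mem_Sset (by omega) (by omega)

lemma forall_even_cons_iterate_twist_nil_iff (ℓ k : ℕ) :
    (∀ x ∈ (ℓ + 1 : ℤ) :: twist^[k] [], Even x) ↔ Odd ℓ := by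
  rw [List.forall_mem_cons, forall_even_iterate_twist_iff]
  simp

lemma forall_even_iterate_twist_neg_succ_iff (k m : ℕ) :
    (∀ x ∈ twist^[k] [-((m : ℤ) + 1)], Even x) ↔ Odd m := by
  rw [forall_even_iterate_twist_iff, List.forall_mem_singleton, even_neg]
  simp

lemma forall_even_pair_iff (ℓ m : ℕ) : (∀ x ∈ [(ℓ : ℤ), m], Even x) ↔ Even ℓ ∧ Even m := by
  simp

end JKnot

/-- Theorem (`M`-degree of the `Â`-polynomial of `J(ℓ,−m)`, `α = ℓm+1`, `β = m`):
`Φ(0,1) = 2ℓm` if `ℓ, m` both even, `Φ(0,1) = m(ℓm+1)` if `ℓ` is odd, and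
`Φ(0,1) = ℓ(ℓm+1)` if `m` is odd. -/
theorem Mdegree_J_ell_neg_m (ℓ m : ℕ) (hℓ : 1 ≤ ℓ) (hm : 1 ≤ m)
    (hpar : Even ℓ ∨ Even m) (n₀ : List ℤ)
    (hn₀S : n₀ ∈ Sset ((ℓ : ℤ) * m + 1) (m : ℤ)) (hn₀even : ∀ n ∈ n₀, Even n) :
    ((Even ℓ ∧ Even m) →
      totalSeminorm ((ℓ : ℤ) * m + 1) (m : ℤ) n₀ 0 1 = 2 * (ℓ : ℚ) * (m : ℚ)) ∧
    (Odd ℓ →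
      totalSeminorm ((ℓ : ℤ) * m + 1) (m : ℤ) n₀ 0 1 =
        (m : ℚ) * ((ℓ : ℚ) * (m : ℚ) + 1)) ∧
    (Odd m →
      totalSeminorm ((ℓ : ℤ) * m + 1) (m : ℤ) n₀ 0 1 =
        (ℓ : ℚ) * ((ℓ : ℚ) * (m : ℚ) + 1)) := by
  simp only [totalSeminorm_J_zero_one hℓ hm n₀, ← Nat.not_even_iff_odd]
  rcases eq_of_mem_Sset hℓ hm hn₀S with rfl | rfl | rfl
  · have hℓo : ¬Even ℓ := Nat.not_even_iff_odd.mpr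
      ((forall_even_cons_iterate_twist_nil_iff ℓ _).mp hn₀even)
    rw [sval_cons_iterate_twist_nil ℓ hm]
    refine ⟨fun h => absurd h.1 hℓo, fun _ => ?_, fun h => absurd (hpar.resolve_left hℓo) h⟩
    simp [abs_of_nonneg, abs_of_nonpos]
    ring
  · have hmo : ¬Even m := Nat.not_even_iff_odd.mpr
      ((forall_even_iterate_twist_neg_succ_iff _ m).mp hn₀even)
    rw [sval_iterate_twist_neg_succ hℓ m]
    refine ⟨fun h => absurd h.2 hmo, fun h => absurd (hpar.resolve_right hmo) h, fun _ => ?_⟩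
    simp [abs_of_nonneg, add_nonneg]
    ring
  · obtain ⟨hℓe, hme⟩ := (forall_even_pair_iff ℓ m).mp hn₀even
    rw [sval_pair (by omega) (by omega)]
    refine ⟨fun _ => ?_, fun h => absurd hℓe h, fun h => absurd hme h⟩
    simp [abs_of_nonneg, abs_of_nonpos]
    ring
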